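/- arXiv:1511.03247 — 2 statements merged into one kernel-verified Lean document; each statement's English description precedes it below -/
import Mathlib

section
/- Let n be a nonnegative integer, m ≥ 1 an integer, a a real number with a ≥ (m+3)/2, and θ₀ ∈ (0, π/2]. Suppose f : ℝ → ℝ extends to a function on ℝ ∪ S that is continuous on S, holomorphic in the interior of S, and satisfies |f(z)| ≤ μ·|z+a+1|^λ for all z ∈ S, where μ ≥ 0 and 0 ≤ λ < 2m−1 are real. Then |R_m| ≤ C(μ, λ, θ₀, m) / (a − m/2 − 1/2)^{2m−1−λ}, where C(μ, λ, θ₀, m) := (μ·(2 + sin θ₀)^λ / ((2m+1)(2m−1−λ)(2 sin θ₀)^{2m})) · ∑_{j=1}^{m} |γ_{m,j}| · j^{2m+1}. -/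
open Real

/-- The coefficients `γ_{m,j} := (−1)^{j−1} · (2/j) · C(2m, m+j) / C(2m, m)`. -/
noncomputable def altGamma (m j : ℕ) : ℝ :=
  (-1 : ℝ) ^ (j - 1) * (2 / (j : ℝ)) * ((2 * m).choose (m + j) : ℝ) / ((2 * m).choose m : ℝ)

/-- The remainder `R_m` of the alternative (Alt) summation formula. -/
noncomputable def altR (m n : ℕ) (f : ℝ → ℝ) : ℝ :=
  1 / (((2 * m - 1).factorial : ℝ) * 2 ^ (2 * m + 1)) *
    ∫ s in (0 : ℝ)..1, (1 - s) ^ (2 * m - 1) *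
      ∫ v in (-1 : ℝ)..1, v ^ (2 * m) *
        ∑ j ∈ Finset.Icc 1 m, altGamma m j * (j : ℝ) ^ (2 * m + 1) *
          ∑ k ∈ Finset.range n, iteratedDeriv (2 * m) f ((k : ℝ) + (j : ℝ) * s * v / 2)

/-- The closed sector of the complex plane with vertex `−a` and half-angle `θ₀`:
`S := { −a + r·e^{iθ} : r ≥ 0, |θ| ≤ θ₀ }`. -/
def altSector (a θ₀ : ℝ) : Set ℂ :=
  {z : ℂ | ∃ r θ : ℝ, 0 ≤ r ∧ |θ| ≤ θ₀ ∧ z = -(a : ℂ) + r * Complex.exp (θ * Complex.I)}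

open Metric MeasureTheory

/-!
Around a real point `x` with `x + a ≥ 1` the disc of radius `(x + a) sin θ₀` lies in the sector,
and on its boundary `|z + a + 1| ≤ (x + a) (2 + sin θ₀)`, so Cauchy's estimate gives
`|f⁽²ᵐ⁾ x| ≤ (2m)! μ (2 + sin θ₀)^λ sin θ₀^(-2m) (x + a)^(-p)` with `p = 2m - λ > 1`.
Every argument `k + j s v / 2` of `f⁽²ᵐ⁾` in `R_m` has `x + a ≥ k + c + 1/2`, `c = a - m/2 - 1/2`,
and since `t ↦ t^(-p)` lies above its tangent at the midpoint of `[c + k, c + k + 1]`,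
`∑ₖ (k + c + 1/2)^(-p) ≤ ∫_c^∞ t^(-p) dt = c^(1-p) / (p - 1)`. The weights of the `s`- and
`v`-integrals in `R_m` integrate to `1 / (2m)` and `2 / (2m + 1)`.
-/

lemma mem_altSector_of_cos_mul_norm_le_re {a θ₀ : ℝ} (hθ₀ : 0 < θ₀) (hθ₀π : θ₀ ≤ π) {z : ℂ}
    (h : cos θ₀ * ‖z + a‖ ≤ (z + a).re) : z ∈ altSector a θ₀ := by
  rcases eq_or_ne (z + a) 0 with hw | hw
  · exact ⟨0, 0, le_rfl, by simpa using hθ₀.le, by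
      simp only [Complex.ofReal_zero, zero_mul, add_zero]; linear_combination hw⟩
  refine ⟨‖z + a‖, (z + a).arg, norm_nonneg _, ?_, by
    rw [Complex.norm_mul_exp_arg_mul_I]; ring⟩
  have hcos : cos θ₀ ≤ cos |(z + a).arg| := by
    rw [cos_abs, Complex.cos_arg hw, le_div_iff₀ (norm_pos_iff.mpr hw)]
    exact h
  by_contra! hlt
  exact (strictAntiOn_cos ⟨hθ₀.le, hθ₀π⟩ ⟨abs_nonneg _, Complex.abs_arg_le_pi _⟩ hlt).not_ge hcos

lemma closedBall_subset_altSector {a θ₀ x : ℝ} (hθ₀ : 0 < θ₀) (hθ₀π : θ₀ ≤ π / 2)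
    (hx : 0 < x + a) : closedBall (x : ℂ) ((x + a) * sin θ₀) ⊆ altSector a θ₀ := by
  intro z hz
  refine mem_altSector_of_cos_mul_norm_le_re hθ₀ (by linarith [pi_pos]) ?_
  set X := x + a
  set c := cos θ₀
  set u := (z + a).re
  set v := (z + a).im
  have hc : 0 ≤ c := cos_nonneg_of_mem_Icc ⟨by linarith, hθ₀π⟩
  have hnorm : ‖z + a‖ ^ 2 = u ^ 2 + v ^ 2 := by
    rw [Complex.sq_norm, Complex.normSq_apply]; ring
  have hball : (u - X) ^ 2 + v ^ 2 ≤ (X * sin θ₀) ^ 2 := by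
    have hw : z - x = z + a - (X : ℂ) := by push_cast [X]; ring
    rw [mem_closedBall, Complex.dist_eq, hw] at hz
    calc (u - X) ^ 2 + v ^ 2 = ‖z + a - (X : ℂ)‖ ^ 2 := by
          rw [Complex.sq_norm, Complex.normSq_apply]
          simp only [Complex.sub_re, Complex.sub_im, Complex.ofReal_re, Complex.ofReal_im, sub_zero]
          ring
      _ ≤ (X * sin θ₀) ^ 2 := pow_le_pow_left₀ (norm_nonneg _) hz 2
  have key : u ^ 2 + v ^ 2 ≤ 2 * u * X - X ^ 2 * c ^ 2 := by
    linear_combination hball + X ^ 2 * sin_sq_add_cos_sq θ₀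
  have hu : 0 ≤ u := by
    by_contra! hneg
    nlinarith [mul_neg_of_neg_of_pos hneg hx, sq_nonneg u, sq_nonneg v, sq_nonneg (X * c)]
  -- `c² (u² + v²) ≤ c² (2 u X - X² c²) = u² - (u - X c²)²`
  have hsq : (c * ‖z + a‖) ^ 2 ≤ u ^ 2 := by
    rw [mul_pow, hnorm]
    nlinarith [mul_le_mul_of_nonneg_left key (sq_nonneg c), sq_nonneg (u - X * c ^ 2)]
  exact (abs_le_of_sq_le_sq' hsq hu).2

lemma iteratedDeriv_eq_re_iteratedDeriv {f : ℝ → ℝ} {g : ℂ → ℂ} {U : Set ℂ} (hU : IsOpen U)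
    (hg : DifferentiableOn ℂ g U) (hext : ∀ x : ℝ, (x : ℂ) ∈ U → g x = f x) (N : ℕ) :
    ∀ x : ℝ, (x : ℂ) ∈ U → iteratedDeriv N f x = (iteratedDeriv N g x).re := by
  induction N with
  | zero => intro x hx; simp [hext x hx]
  | succ N ih =>
    intro x hx
    have hnhds : iteratedDeriv N f =ᶠ[nhds x] fun t : ℝ ↦ (iteratedDeriv N g t).re :=
      Filter.eventuallyEq_of_mem ((hU.preimage Complex.continuous_ofReal).mem_nhds hx) ih
    have hderiv : HasDerivAt (iteratedDeriv N g) (iteratedDeriv (N + 1) g x) x := by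
      rw [iteratedDeriv_succ, iteratedDeriv_eq_iterate]
      exact ((hg.analyticOnNhd hU x hx).iterated_deriv N).differentiableAt.hasDerivAt
    rw [iteratedDeriv_succ, hnhds.deriv_eq]
    exact hderiv.real_of_complex.deriv

lemma abs_iteratedDeriv_le_of_altSector {a θ₀ μ lam : ℝ} {f : ℝ → ℝ} {g : ℂ → ℂ}
    (hθ : θ₀ ∈ Set.Ioc 0 (π / 2)) (hext : ∀ x : ℝ, g x = f x)
    (hcont : ContinuousOn g (altSector a θ₀))
    (hholo : DifferentiableOn ℂ g (interior (altSector a θ₀))) (hμ : 0 ≤ μ) (hlam0 : 0 ≤ lam)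
    (hbound : ∀ z ∈ altSector a θ₀, ‖g z‖ ≤ μ * ‖z + a + 1‖ ^ lam) (N : ℕ) {x : ℝ}
    (hx : 1 ≤ x + a) :
    |iteratedDeriv N f x| ≤
      N.factorial * μ * (2 + sin θ₀) ^ lam / sin θ₀ ^ N * (x + a) ^ (lam - N) := by
  have hsin : 0 < sin θ₀ := sin_pos_of_pos_of_lt_pi hθ.1 (by linarith [hθ.2, pi_pos])
  have hxa : 0 < x + a := by linarith
  set R := (x + a) * sin θ₀
  have hR : 0 < R := mul_pos hxa hsin
  have hsub : closedBall (x : ℂ) R ⊆ altSector a θ₀ :=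
    closedBall_subset_altSector hθ.1 hθ.2 hxa
  have hball : ball (x : ℂ) R ⊆ interior (altSector a θ₀) :=
    interior_maximal (ball_subset_closedBall.trans hsub) isOpen_ball
  have hdc : DiffContOnCl ℂ g (ball (x : ℂ) R) :=
    ⟨hholo.mono hball, hcont.mono (closure_ball_subset_closedBall.trans hsub)⟩
  have hsphere : ∀ z ∈ sphere (x : ℂ) R, ‖g z‖ ≤ μ * ((x + a) * (2 + sin θ₀)) ^ lam := by
    intro z hz
    refine (hbound z (hsub (sphere_subset_closedBall hz))).trans ?_
    gcongr
    have hcenter : ‖(x : ℂ) + a + 1‖ = x + a + 1 := by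
      rw [← Complex.ofReal_one, ← Complex.ofReal_add, ← Complex.ofReal_add, Complex.norm_real,
        Real.norm_of_nonneg (by linarith)]
    calc ‖z + a + 1‖ ≤ ‖z - x‖ + ‖(x : ℂ) + a + 1‖ := by
          rw [show z + a + 1 = (z - x) + ((x : ℂ) + a + 1) by ring]; exact norm_add_le _ _
      _ = R + (x + a + 1) := by rw [← Complex.dist_eq, mem_sphere.mp hz, hcenter]
      _ ≤ (x + a) * (2 + sin θ₀) := by linarith
  have hcauchy := Complex.norm_iteratedDeriv_le_of_forall_mem_sphere_norm_le N hR hdc hsphere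
  have hre := iteratedDeriv_eq_re_iteratedDeriv isOpen_interior hholo (fun y _ ↦ hext y) N x
    (hball (mem_ball_self hR))
  calc |iteratedDeriv N f x| ≤ ‖iteratedDeriv N g x‖ := hre ▸ Complex.abs_re_le_norm _
    _ ≤ N.factorial * (μ * ((x + a) * (2 + sin θ₀)) ^ lam) / R ^ N := hcauchy
    _ = N.factorial * μ * (2 + sin θ₀) ^ lam / sin θ₀ ^ N * (x + a) ^ (lam - N) := by
      rw [mul_rpow hxa.le (by linarith [sin_le_one θ₀]), rpow_sub hxa, rpow_natCast, mul_pow]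
      field_simp

lemma le_intervalIntegral_of_affine_le {φ : ℝ → ℝ} {d L : ℝ}
    (hφ : IntervalIntegrable φ volume d (d + 1))
    (h : ∀ t ∈ Set.Icc d (d + 1), φ (d + 1 / 2) + L * (t - (d + 1 / 2)) ≤ φ t) :
    φ (d + 1 / 2) ≤ ∫ t in d..(d + 1), φ t := by
  have hline : IntervalIntegrable (fun t ↦ φ (d + 1 / 2) + L * (t - (d + 1 / 2)))
      volume d (d + 1) := by
    apply Continuous.intervalIntegrable; fun_prop
  calc φ (d + 1 / 2) = ∫ t in d..(d + 1), φ (d + 1 / 2) + L * (t - (d + 1 / 2)) := by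
        rw [intervalIntegral.integral_add intervalIntegrable_const (by
          apply Continuous.intervalIntegrable; fun_prop), intervalIntegral.integral_const_mul,
          intervalIntegral.integral_comp_sub_right (fun t ↦ t), integral_id]
        simp only [intervalIntegral.integral_const, smul_eq_mul]
        ring
    _ ≤ ∫ t in d..(d + 1), φ t :=
        intervalIntegral.integral_mono_on (by linarith) hline hφ h

lemma rpow_neg_tangent_le {p x₀ t : ℝ} (hp : 0 ≤ p) (hx₀ : 0 < x₀) (ht : 0 < t) :
    x₀ ^ (-p) + -p * x₀ ^ (-p - 1) * (t - x₀) ≤ t ^ (-p) := by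
  have hu : 0 < t / x₀ := div_pos ht hx₀
  -- Bernoulli: `(t / x₀) ^ (-p) = exp (-p log (t / x₀)) ≥ 1 - p log (t / x₀) ≥ 1 - p (t / x₀ - 1)`
  have hbernoulli : 1 - p * (t / x₀ - 1) ≤ (t / x₀) ^ (-p) := by
    rw [rpow_def_of_pos hu]
    nlinarith [add_one_le_exp (log (t / x₀) * -p), log_le_sub_one_of_pos hu]
  rw [div_rpow ht.le hx₀.le, le_div_iff₀ (rpow_pos_of_pos hx₀ _)] at hbernoulli
  rw [rpow_sub hx₀, rpow_one]
  calc x₀ ^ (-p) + -p * (x₀ ^ (-p) / x₀) * (t - x₀) = (1 - p * (t / x₀ - 1)) * x₀ ^ (-p) := by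
        field_simp; ring
    _ ≤ t ^ (-p) := hbernoulli

lemma rpow_neg_add_half_le_integral {p d : ℝ} (hp : 0 ≤ p) (hd : 0 < d) :
    (d + 1 / 2) ^ (-p) ≤ ∫ t in d..(d + 1), t ^ (-p) :=
  le_intervalIntegral_of_affine_le
    (intervalIntegral.intervalIntegrable_rpow (Or.inr (by
      rw [Set.uIcc_of_le (by linarith)]; exact fun h ↦ by linarith [h.1])))
    fun t ht ↦ rpow_neg_tangent_le hp (by linarith) (by linarith [ht.1])

lemma sum_rpow_neg_le {p c : ℝ} (hp : 1 < p) (hc : 0 < c) (n : ℕ) :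
    ∑ k ∈ Finset.range n, ((k : ℝ) + c + 1 / 2) ^ (-p) ≤ c ^ (1 - p) / (p - 1) := by
  set F : ℕ → ℝ := fun k ↦ (c + k) ^ (1 - p) / (p - 1)
  have hstep (k : ℕ) : ((k : ℝ) + c + 1 / 2) ^ (-p) ≤ F k - F (k + 1) := by
    have hck : 0 < c + k := by positivity
    have hint := integral_rpow (a := c + k) (b := c + k + 1) (r := -p) (Or.inr ⟨by linarith, by
      rw [Set.uIcc_of_le (by linarith)]; exact fun h ↦ by linarith [h.1]⟩)
    have := rpow_neg_add_half_le_integral (by linarith : (0 : ℝ) ≤ p) hck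
    rw [hint] at this
    simp only [F, Nat.cast_succ, ← add_assoc, div_sub_div_same]
    convert this using 1
    · ring_nf
    · rw [show -p + 1 = 1 - p by ring, ← neg_div_neg_eq, neg_sub, neg_sub]
  calc ∑ k ∈ Finset.range n, ((k : ℝ) + c + 1 / 2) ^ (-p)
      ≤ ∑ k ∈ Finset.range n, (F k - F (k + 1)) := Finset.sum_le_sum fun k _ ↦ hstep k
    _ = F 0 - F n := Finset.sum_range_sub' F n
    _ ≤ c ^ (1 - p) / (p - 1) := by
      have : 0 ≤ F n := div_nonneg (by positivity) (by linarith)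
      simp only [F, Nat.cast_zero, add_zero]; linarith

lemma abs_sum_range_le_of_abs_le_rpow_neg {F : ℝ → ℝ} {a c δ M p : ℝ} (hp : 1 < p)
    (hM : 0 ≤ M) (hc : 1 / 2 ≤ c) (hF : ∀ y, 1 ≤ y + a → |F y| ≤ M * (y + a) ^ (-p))
    (hδ : c + 1 / 2 ≤ δ + a) (n : ℕ) :
    |∑ k ∈ Finset.range n, F (k + δ)| ≤ M * (c ^ (1 - p) / (p - 1)) := by
  calc |∑ k ∈ Finset.range n, F (k + δ)| ≤ ∑ k ∈ Finset.range n, |F (k + δ)| :=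
        Finset.abs_sum_le_sum_abs _ _
    _ ≤ ∑ k ∈ Finset.range n, M * ((k : ℝ) + c + 1 / 2) ^ (-p) := by
        gcongr with k
        have hk : (0 : ℝ) ≤ k := k.cast_nonneg
        refine (hF _ (by linarith)).trans (mul_le_mul_of_nonneg_left ?_ hM)
        exact rpow_le_rpow_of_nonpos (by positivity) (by linarith) (by linarith)
    _ ≤ M * (c ^ (1 - p) / (p - 1)) := by
        rw [← Finset.mul_sum]
        exact mul_le_mul_of_nonneg_left (sum_rpow_neg_le hp (by linarith) n) hM

lemma abs_sum_mul_le {ι : Type*} (s : Finset ι) (u S : ι → ℝ) {X : ℝ}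
    (hS : ∀ i ∈ s, |S i| ≤ X) : |∑ i ∈ s, u i * S i| ≤ (∑ i ∈ s, |u i|) * X := by
  calc |∑ i ∈ s, u i * S i| ≤ ∑ i ∈ s, |u i| * |S i| := by
        simpa only [abs_mul] using Finset.abs_sum_le_sum_abs (fun i ↦ u i * S i) s
    _ ≤ ∑ i ∈ s, |u i| * X :=
        Finset.sum_le_sum fun i hi ↦ mul_le_mul_of_nonneg_left (hS i hi) (abs_nonneg _)
    _ = (∑ i ∈ s, |u i|) * X := (Finset.sum_mul _ _ _).symm

lemma abs_intervalIntegral_mul_le {w h : ℝ → ℝ} {a b B : ℝ} (hab : a ≤ b)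
    (hw : IntervalIntegrable w volume a b) (hw0 : ∀ t ∈ Set.Icc a b, 0 ≤ w t)
    (hh : ∀ t ∈ Set.Icc a b, |h t| ≤ B) :
    |∫ t in a..b, w t * h t| ≤ (∫ t in a..b, w t) * B := by
  rw [← intervalIntegral.integral_mul_const B w, ← Real.norm_eq_abs]
  refine intervalIntegral.norm_integral_le_of_norm_le hab
    (ae_of_all _ fun t ht ↦ ?_) (hw.mul_const B)
  have ht' : t ∈ Set.Icc a b := Set.Ioc_subset_Icc_self ht
  rw [Real.norm_eq_abs, abs_mul, abs_of_nonneg (hw0 t ht')]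
  exact mul_le_mul_of_nonneg_left (hh t ht') (hw0 t ht')

lemma abs_altR_le {m n : ℕ} {f : ℝ → ℝ} (hm : 1 ≤ m) {B : ℝ}
    (hB : ∀ s ∈ Set.Icc (0 : ℝ) 1, ∀ v ∈ Set.Icc (-1 : ℝ) 1,
      |∑ j ∈ Finset.Icc 1 m, altGamma m j * (j : ℝ) ^ (2 * m + 1) *
        ∑ k ∈ Finset.range n, iteratedDeriv (2 * m) f ((k : ℝ) + (j : ℝ) * s * v / 2)| ≤ B) :
    |altR m n f| ≤ B / ((2 * m).factorial * 2 ^ (2 * m) * (2 * m + 1)) := by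
  obtain ⟨l, rfl⟩ := Nat.exists_eq_add_of_le' hm
  have hodd : 2 * (l + 1) - 1 = 2 * l + 1 := by omega
  have hinner (s : ℝ) (hs : s ∈ Set.Icc (0 : ℝ) 1) :
      |∫ v in (-1 : ℝ)..1, v ^ (2 * (l + 1)) *
        ∑ j ∈ Finset.Icc 1 (l + 1), altGamma (l + 1) j * (j : ℝ) ^ (2 * (l + 1) + 1) *
          ∑ k ∈ Finset.range n, iteratedDeriv (2 * (l + 1)) f ((k : ℝ) + (j : ℝ) * s * v / 2)|
        ≤ 2 / (2 * (l + 1) + 1) * B := by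
    refine (abs_intervalIntegral_mul_le (by norm_num) ((continuous_pow _).intervalIntegrable _ _)
      (fun v _ ↦ (Even.pow_nonneg ⟨l + 1, by ring⟩ v)) (hB s hs)).trans_eq ?_
    rw [integral_pow, Odd.neg_one_pow ⟨l + 1, rfl⟩]
    push_cast; ring
  have houter := abs_intervalIntegral_mul_le (w := fun s : ℝ ↦ (1 - s) ^ (2 * (l + 1) - 1))
    (by norm_num) (by apply Continuous.intervalIntegrable; fun_prop)
    (fun s hs ↦ pow_nonneg (sub_nonneg.mpr hs.2) _) hinner
  rw [intervalIntegral.integral_comp_sub_left (fun s ↦ s ^ (2 * (l + 1) - 1)), hodd] at houter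
  rw [altR, abs_mul, abs_of_nonneg (by positivity), hodd, ← le_div_iff₀' (by positivity)]
  refine houter.trans_eq ?_
  simp only [sub_self, sub_zero, integral_pow, Nat.factorial_succ (2 * l + 1),
    show 2 * (l + 1) = 2 * l + 1 + 1 by ring]
  push_cast
  field_simp
  ring

/-- Bound on the Alt remainder for functions admitting a polynomially growing analytic
extension to the sector `S`:
`|R_m| ≤ C(μ,λ,θ₀,m) / (a − m/2 − 1/2)^{2m−1−λ}` where
`C(μ,λ,θ₀,m) = (μ(2+sin θ₀)^λ/((2m+1)(2m−1−λ)(2 sin θ₀)^{2m})) ∑_{j=1}^m |γ_{m,j}| j^{2m+1}`. -/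
theorem alt_remainder_sector_bound (n m : ℕ) (hm : 1 ≤ m) (a θ₀ μ lam : ℝ)
    (ha : ((m : ℝ) + 3) / 2 ≤ a) (hθ : θ₀ ∈ Set.Ioc 0 (π / 2))
    (f : ℝ → ℝ) (g : ℂ → ℂ) (hext : ∀ x : ℝ, g (x : ℂ) = (f x : ℂ))
    (hcont : ContinuousOn g (altSector a θ₀))
    (hholo : DifferentiableOn ℂ g (interior (altSector a θ₀)))
    (hμ : 0 ≤ μ) (hlam0 : 0 ≤ lam) (hlam : lam < 2 * (m : ℝ) - 1)
    (hbound : ∀ z ∈ altSector a θ₀,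
      ‖g z‖ ≤ μ * ‖z + (a : ℂ) + 1‖ ^ lam) :
    |altR m n f| ≤
      (μ * (2 + Real.sin θ₀) ^ lam /
          ((2 * (m : ℝ) + 1) * (2 * (m : ℝ) - 1 - lam) * (2 * Real.sin θ₀) ^ (2 * m)) *
        ∑ j ∈ Finset.Icc 1 m, |altGamma m j| * (j : ℝ) ^ (2 * m + 1)) /
      (a - (m : ℝ) / 2 - 1 / 2) ^ (2 * (m : ℝ) - 1 - lam) := by
  have hsin : 0 < sin θ₀ := sin_pos_of_pos_of_lt_pi hθ.1 (by linarith [hθ.2, pi_pos])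
  set c := a - (m : ℝ) / 2 - 1 / 2 with hc_def
  set p := 2 * (m : ℝ) - lam with hp_def
  set M := (2 * m).factorial * μ * (2 + sin θ₀) ^ lam / sin θ₀ ^ (2 * m) with hM_def
  have hc : 1 ≤ c := by linarith
  have hp : 1 < p := by linarith
  have hderiv (y : ℝ) (hy : 1 ≤ y + a) : |iteratedDeriv (2 * m) f y| ≤ M * (y + a) ^ (-p) := by
    convert abs_iteratedDeriv_le_of_altSector hθ hext hcont hholo hμ hlam0 hbound (2 * m) hy
      using 3
    push_cast; ring
  have hshift (j : ℕ) (hj : j ∈ Finset.Icc 1 m) (s : ℝ) (hs : s ∈ Set.Icc (0 : ℝ) 1) (v : ℝ)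
      (hv : v ∈ Set.Icc (-1 : ℝ) 1) : c + 1 / 2 ≤ (j : ℝ) * s * v / 2 + a := by
    have hjm : (j : ℝ) ≤ m := by exact_mod_cast (Finset.mem_Icc.mp hj).2
    have hsv : -1 ≤ s * v := by nlinarith [hs.1, hs.2, hv.1, hv.2]
    nlinarith [j.cast_nonneg (α := ℝ)]
  have hsum (s : ℝ) (hs : s ∈ Set.Icc (0 : ℝ) 1) (v : ℝ) (hv : v ∈ Set.Icc (-1 : ℝ) 1) :=
    abs_sum_mul_le (Finset.Icc 1 m) (fun j ↦ altGamma m j * (j : ℝ) ^ (2 * m + 1)) _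
      fun j hj ↦ abs_sum_range_le_of_abs_le_rpow_neg hp (by positivity) (by linarith) hderiv
        (hshift j hj s hs v hv) n
  refine (abs_altR_le hm hsum).trans_eq ?_
  simp only [hM_def, abs_mul, abs_pow, Nat.abs_cast]
  rw [show 2 * (m : ℝ) - 1 - lam = p - 1 by ring, show 1 - p = -(p - 1) by ring,
    rpow_neg (by linarith), mul_pow]
  field_simp
end

section
/- Let m ≥ 1 be an integer and P : ℝ → ℝ a polynomial of degree at most 2m−1. Then for every nonnegative integer n, G_{m,P}(n) = G^EM_{m,P}(n); that is, ∑_{j=1}^{m} γ_{m,j} ∑_{i=0}^{j−1} P(n−1+j/2−i) = P(n−1) + P′(n−1)/2 + ∑_{j=1}^{m−1} (B_{2j}/(2j)!) · P^{(2j)}(n−1). -/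
open Finset

theorem sum_range_neg_one_pow_mul_choose_mul_sub_pow {R : Type*} [CommRing R] {n d : ℕ}
    (hd : d < n) (c : R) :
    ∑ k ∈ range (n + 1), (-1 : R) ^ (n - k) * n.choose k * ((k : R) - c) ^ d = 0 := by
  have h := congrFun (fwdDiff_iter_pow_eq_zero_of_lt (R := R) hd) (-c)
  rw [fwdDiff_iter_eq_sum_shift, Pi.zero_apply] at h
  rw [← h]
  refine sum_congr rfl fun k _ => ?_
  simp [zsmul_eq_mul, neg_add_eq_sub]

theorem sum_Icc_neg_one_pow_mul_choose_mul_pow_of_even {m d : ℕ} (hd : Even d)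
    (hdm : d < 2 * m) :
    ∑ j ∈ Icc 1 m, (-1 : ℝ) ^ (j - 1) * (2 * m).choose (m + j) * (j : ℝ) ^ d =
      (2 * m).choose m * 0 ^ d / 2 := by
  set g : ℕ → ℝ := fun k => (-1 : ℝ) ^ (2 * m - k) * (2 * m).choose k * ((k : ℝ) - m) ^ d
  have hsymm : ∀ k ∈ range m, g (m - 1 - k) = g (m + 1 + k) := by
    intro k hk
    have hk : k < m := mem_range.1 hk
    simp only [g]
    rw [show 2 * m - (m - 1 - k) = 2 * m - (m + 1 + k) + 2 * (k + 1) by omega, pow_add,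
      pow_mul, neg_one_sq, one_pow, mul_one, ← Nat.choose_symm (by omega : m + 1 + k ≤ 2 * m),
      show 2 * m - (m + 1 + k) = m - 1 - k by omega]
    have hcast : ((m - 1 - k : ℕ) : ℝ) = m - 1 - k := by
      rw [Nat.sub_sub, Nat.cast_sub (by omega)]; push_cast; ring
    rw [hcast, ← hd.neg_pow]
    push_cast
    congr 2
    ring
  have hupper : ∑ k ∈ range m, g (m + 1 + k) =
      (-1) ^ (m + 1) *
        ∑ j ∈ Icc 1 m, (-1 : ℝ) ^ (j - 1) * (2 * m).choose (m + j) * (j : ℝ) ^ d := by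
    rw [← Ico_add_one_right_eq_Icc, sum_Ico_eq_sum_range, Nat.add_sub_cancel, mul_sum]
    refine sum_congr rfl fun k hk => ?_
    simp only [g]
    have hk : k < m := mem_range.1 hk
    rw [show 2 * m - (m + 1 + k) = m - 1 - k by omega]
    have hsign : (-1 : ℝ) ^ (m - 1 - k) = (-1) ^ (m + 1) * (-1) ^ k := by
      rw [← pow_add, show m + 1 + k = m - 1 - k + 2 * (k + 1) by omega, pow_add, pow_mul]
      simp
    rw [hsign, Nat.add_sub_cancel_left, ← add_assoc]
    push_cast
    ring
  have hzero : ∑ k ∈ range (m + 1 + m), g k = 0 := by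
    rw [show m + 1 + m = 2 * m + 1 by ring]
    exact sum_range_neg_one_pow_mul_choose_mul_sub_pow hdm _
  rw [sum_range_add, sum_range_succ, ← sum_range_reflect, sum_congr rfl hsymm, hupper] at hzero
  have hgm : g m = (-1) ^ m * (2 * m).choose m * 0 ^ d := by
    simp only [g, sub_self, two_mul, Nat.add_sub_cancel]
  rw [hgm, pow_succ] at hzero
  rcases neg_one_pow_eq_or ℝ m with h | h <;> rw [h] at hzero <;> linarith

theorem eq_bernoulli'_of_sum_range_choose_mul {K : Type*} [Field K] [CharZero K] {a : ℕ → K}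
    {N : ℕ} (ha : ∀ n ≤ N, ∑ k ∈ range n, (n.choose k : K) * a k = n) {k : ℕ}
    (hk : k < N) :
    a k = bernoulli' k := by
  induction k using Nat.strong_induction_on with
  | _ k ih =>
    have ha' := ha (k + 1) hk
    have hB : ∑ t ∈ range (k + 1), ((k + 1).choose t : K) * (bernoulli' t : K) = k + 1 := by
      exact_mod_cast sum_bernoulli' (k + 1)
    rw [sum_range_succ, Nat.choose_succ_self_right,
      sum_congr rfl fun t ht => by
        rw [ih t (mem_range.1 ht) (by have := mem_range.1 ht; omega)]] at ha'
    rw [sum_range_succ, Nat.choose_succ_self_right] at hB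
    apply mul_left_cancel₀ (Nat.cast_ne_zero.2 k.succ_ne_zero : ((k + 1 : ℕ) : K) ≠ 0)
    push_cast at ha' hB ⊢
    linear_combination ha' - hB

theorem sum_range_two_mul_mul_bernoulli' {K : Type*} [Field K] [CharZero K] (h : ℕ → K)
    {m : ℕ} (hm : 1 ≤ m) :
    ∑ k ∈ range (2 * m), h k * bernoulli' k =
      h 0 + h 1 / 2 + ∑ j ∈ Icc 1 (m - 1), h (2 * j) * bernoulli (2 * j) := by
  obtain ⟨m, rfl⟩ : ∃ m', m = m' + 1 := ⟨m - 1, by omega⟩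
  rw [Nat.add_sub_cancel]
  clear hm
  induction m with
  | zero => simp [sum_range_succ, div_eq_mul_inv]
  | succ m ih =>
    rw [show 2 * (m + 1 + 1) = 2 * (m + 1) + 1 + 1 by ring, sum_range_succ, sum_range_succ, ih,
      sum_Icc_succ_top (by omega), bernoulli'_eq_zero_of_odd (odd_two_mul_add_one _) (by omega),
      bernoulli_eq_bernoulli'_of_ne_one (by omega)]
    push_cast
    ring

theorem sum_range_choose_mul_pow_eq_add_one_pow_sub_pow {R : Type*} [CommRing R] (n : ℕ) (y : R) :
    ∑ k ∈ range n, (n.choose k : R) * y ^ k = (y + 1) ^ n - y ^ n := by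
  rw [add_pow, sum_range_succ, Nat.choose_self]
  simp [mul_comm]

open Polynomial

theorem Polynomial.iteratedDeriv_eval {𝕜 : Type*} [NontriviallyNormedField 𝕜] (P : 𝕜[X])
    (k : ℕ) : iteratedDeriv k (fun x => P.eval x) = fun x => (derivative^[k] P).eval x := by
  rw [iteratedDeriv_eq_iterate]
  exact (Function.Semiconj.iterate_right (f := fun (Q : 𝕜[X]) (x : 𝕜) => Q.eval x)
    (fun Q => by funext y; exact (Polynomial.deriv Q).symm) k P).symm

theorem Polynomial.eval_add_eq_sum_range_iteratedDeriv {𝕜 : Type*} [NontriviallyNormedField 𝕜]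
    [CharZero 𝕜] {P : 𝕜[X]} {N : ℕ} (hP : P.natDegree < N) (x c : 𝕜) :
    P.eval (x + c) =
      ∑ k ∈ range N, iteratedDeriv k (fun x => P.eval x) x / k.factorial * c ^ k := by
  rw [add_comm, ← taylor_eval, eval_eq_sum_range' ((natDegree_taylor P x).trans_lt hP)]
  refine sum_congr rfl fun k _ => ?_
  rw [taylor_coeff, iteratedDeriv_eval, ← factorial_smul_hasseDeriv]
  simp [Nat.factorial_ne_zero]

theorem sum_altGamma_mul_pow_sub_neg_pow {m k : ℕ} (hk : k ≤ 2 * m) :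
    ∑ j ∈ Icc 1 m, altGamma m j * (((j : ℝ) / 2) ^ k - (-((j : ℝ) / 2)) ^ k) =
      if k = 1 then 1 else 0 := by
  rcases Nat.even_or_odd k with hk_even | hk_odd
  · have hk1 : k ≠ 1 := by rintro rfl; exact Nat.not_even_one hk_even
    simp [hk_even.neg_pow, hk1]
  obtain ⟨d, rfl⟩ := hk_odd
  have hC : ((2 * m).choose m : ℝ) ≠ 0 := by exact_mod_cast (Nat.choose_pos (by omega)).ne'
  have hterm : ∀ j ∈ Icc 1 m,
      altGamma m j * (((j : ℝ) / 2) ^ (2 * d + 1) - (-((j : ℝ) / 2)) ^ (2 * d + 1)) =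
      4 / (2 ^ (2 * d + 1) * (2 * m).choose m) *
        ((-1 : ℝ) ^ (j - 1) * (2 * m).choose (m + j) * (j : ℝ) ^ (2 * d)) := by
    intro j hj
    have hj : (j : ℝ) ≠ 0 := by have := (mem_Icc.1 hj).1; positivity
    rw [altGamma, (odd_two_mul_add_one d).neg_pow, div_pow]
    field_simp
    ring
  rw [sum_congr rfl hterm, ← mul_sum,
    sum_Icc_neg_one_pow_mul_choose_mul_pow_of_even (even_two_mul d) (by omega)]
  rcases Nat.eq_zero_or_pos d with rfl | hd
  · field_simp; norm_num
  · rw [if_neg (by omega), zero_pow (by omega)]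
    ring

theorem sum_altGamma_mul_eval_sub_eval_neg {m : ℕ} {Q : ℝ[X]} (hQ : Q.natDegree ≤ 2 * m) :
    ∑ j ∈ Icc 1 m, altGamma m j * (Q.eval ((j : ℝ) / 2) - Q.eval (-((j : ℝ) / 2))) =
      Q.derivative.eval 0 := by
  have hQ' : Q.natDegree < 2 * m + 1 := Nat.lt_succ_of_le hQ
  simp_rw [eval_eq_sum_range' hQ', ← sum_sub_distrib, ← mul_sub, mul_sum]
  rw [sum_comm]
  simp_rw [mul_left_comm _ (Q.coeff _), ← mul_sum]
  rw [sum_congr rfl fun k hk => by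
      rw [sum_altGamma_mul_pow_sub_neg_pow (Nat.lt_succ_iff.1 (mem_range.1 hk))],
    sum_eq_single 1 (fun k _ hk => by simp [hk]) fun h1 => by
      rw [coeff_eq_zero_of_natDegree_lt (by simp at h1; omega), zero_mul],
    ← coeff_zero_eq_eval_zero, coeff_derivative]
  simp

noncomputable def altMoment (m k : ℕ) : ℝ :=
  ∑ j ∈ Icc 1 m, altGamma m j * ∑ i ∈ range j, ((j : ℝ) / 2 - i) ^ k

theorem sum_range_choose_mul_altMoment {m n : ℕ} (hn : n ≤ 2 * m) :
    ∑ k ∈ range n, (n.choose k : ℝ) * altMoment m k = n := by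
  have htelescope : ∀ j : ℕ,
      ∑ k ∈ range n, (n.choose k : ℝ) * ∑ i ∈ range j, ((j : ℝ) / 2 - i) ^ k =
        ((X + C (1 : ℝ)) ^ n).eval ((j : ℝ) / 2) -
          ((X + C (1 : ℝ)) ^ n).eval (-((j : ℝ) / 2)) := by
    intro j
    simp_rw [mul_sum]
    rw [sum_comm]
    simp_rw [sum_range_choose_mul_pow_eq_add_one_pow_sub_pow]
    calc ∑ i ∈ range j, (((j : ℝ) / 2 - i + 1) ^ n - ((j : ℝ) / 2 - i) ^ n)
        = ∑ i ∈ range j, ((fun i : ℕ => ((j : ℝ) / 2 - i + 1) ^ n) i -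
            (fun i : ℕ => ((j : ℝ) / 2 - i + 1) ^ n) (i + 1)) := by
          simp only [Nat.cast_add_one, sub_add_cancel, sub_add_eq_sub_sub]
      _ = _ := by rw [sum_range_sub']; simp; ring_nf
  simp_rw [altMoment, mul_sum]
  rw [sum_comm]
  simp_rw [mul_left_comm (n.choose _ : ℝ), ← mul_sum]
  rw [sum_congr rfl fun j _ => by rw [htelescope],
    sum_altGamma_mul_eval_sub_eval_neg ((natDegree_pow_X_add_C n _).trans_le hn),
    derivative_X_add_C_pow]
  simp

theorem altMoment_eq_bernoulli' {m k : ℕ} (hk : k < 2 * m) : altMoment m k = bernoulli' k :=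
  eq_bernoulli'_of_sum_range_choose_mul (fun _ hn => sum_range_choose_mul_altMoment hn) hk

theorem sum_altGamma_mul_sum_eval_add {m : ℕ} {P : ℝ[X]} (hP : P.natDegree < 2 * m) (x : ℝ) :
    ∑ j ∈ Icc 1 m, altGamma m j * ∑ i ∈ range j, P.eval (x + j / 2 - i) =
      ∑ k ∈ range (2 * m),
        iteratedDeriv k (fun x => P.eval x) x / k.factorial * altMoment m k := by
  simp_rw [altMoment, add_sub_assoc, eval_add_eq_sum_range_iteratedDeriv hP, mul_sum]
  conv_lhs => arg 2; ext j; rw [sum_comm]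
  rw [sum_comm]
  refine sum_congr rfl fun k _ => sum_congr rfl fun j _ => sum_congr rfl fun i _ => ?_
  ring

/-- For a polynomial `P` of degree at most `2m−1`, the Alt and Euler–Maclaurin centering
terms coincide: `G_{m,P}(n) = G^EM_{m,P}(n)` for every nonnegative integer `n`. -/
theorem alt_eq_em_on_polynomials (m : ℕ) (hm : 1 ≤ m) (P : Polynomial ℝ)
    (hP : P.natDegree ≤ 2 * m - 1) (n : ℕ) :
    ∑ j ∈ Finset.Icc 1 m, altGamma m j *
        ∑ i ∈ Finset.range j, P.eval ((n : ℝ) - 1 + (j : ℝ) / 2 - (i : ℝ)) =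
      P.eval ((n : ℝ) - 1) + deriv (fun x : ℝ => P.eval x) ((n : ℝ) - 1) / 2 +
        ∑ j ∈ Finset.Icc 1 (m - 1),
          ((bernoulli (2 * j) : ℚ) : ℝ) / ((2 * j).factorial : ℝ) *
            iteratedDeriv (2 * j) (fun x : ℝ => P.eval x) ((n : ℝ) - 1) := by
  rw [sum_altGamma_mul_sum_eval_add (by omega),
    sum_congr rfl fun k hk => by rw [altMoment_eq_bernoulli' (mem_range.1 hk)],
    sum_range_two_mul_mul_bernoulli' _ hm]
  simp only [iteratedDeriv_zero, iteratedDeriv_one, Nat.factorial_zero, Nat.factorial_one,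
    Nat.cast_one, div_one]
  congr 1
  exact sum_congr rfl fun j _ => by ring
end
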